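/- arXiv:2212.02029 — 4 statements merged into one kernel-verified Lean document; each statement's English description precedes it below -/
import Mathlib

section
/- Let A be a commutative ring that is an algebra over ℝ, let n be a natural number, and let i : Fin n → A satisfy (i k)² = −1 for every k. Then for every θ : Fin n → ℝ, ∏_{k=1}^{n} (cos θ_k • 1 + sin θ_k • i k) = (∏_{k=1}^{n} cos θ_k) • 1 + ∑_{k=1}^{n} (i k) * ((sin θ_k · ∏_{ℓ=k+1}^{n} cos θ_ℓ) • ∏_{m=1}^{k-1} (cos θ_m • 1 + sin θ_m • i m)). -/
open Real Finset

private lemma aux_rot {A : Type*} [CommRing A] [Algebra ℝ A]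
    (c s : ℕ → ℝ) (x : ℕ → A) :
    ∀ N : ℕ, ∏ k ∈ Finset.range N, (c k • (1 : A) + s k • x k)
      = (∏ k ∈ Finset.range N, c k) • (1 : A)
        + ∑ k ∈ Finset.range N, x k *
            ((s k * ∏ ℓ ∈ Finset.Ioo k N, c ℓ) •
              ∏ m ∈ Finset.range k, (c m • (1 : A) + s m • x m)) := by
  intro N
  induction N with
  | zero => simp
  | succ N ih =>
    rw [Finset.prod_range_succ, ih, Finset.prod_range_succ, Finset.sum_range_succ]
    have h1 : ∀ k ∈ Finset.range N,
        (x k * ((s k * ∏ ℓ ∈ Finset.Ioo k (N+1), c ℓ) •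
          ∏ m ∈ Finset.range k, (c m • (1 : A) + s m • x m)))
        = c N • (x k * ((s k * ∏ ℓ ∈ Finset.Ioo k N, c ℓ) •
          ∏ m ∈ Finset.range k, (c m • (1 : A) + s m • x m))) := by
      intro k hk
      rw [Finset.mem_range] at hk
      have hins : Finset.Ioo k (N+1) = insert N (Finset.Ioo k N) := by
        ext a; simp; omega
      rw [hins, Finset.prod_insert (by simp), mul_left_comm, mul_smul, mul_smul_comm]
    rw [Finset.sum_congr rfl h1, ← Finset.smul_sum]
    have h2 : Finset.Ioo N (N+1) = (∅ : Finset ℕ) := by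
      ext a; simp
    rw [h2, Finset.prod_empty, mul_one]
    rw [← ih]
    set P := ∏ m ∈ Finset.range N, (c m • (1 : A) + s m • x m) with hP
    have expand : P * (c N • (1:A) + s N • x N) = c N • P + s N • (x N * P) := by
      rw [mul_add, mul_smul_comm, mul_smul_comm, mul_one, mul_comm P (x N)]
    rw [expand, ih, smul_add, smul_smul, mul_comm (c N), mul_smul_comm]
    ring

/-- Expansion of the product of `n` independent rotations `∏ e^{i_k θ_k}` in a
commutative ℝ-algebra with commuting elements `i k` squaring to `-1`. -/
theorem multicomplex_rotation_product_expansion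
    (A : Type*) [CommRing A] [Algebra ℝ A] (n : ℕ) (i : Fin n → A)
    (hi : ∀ k, (i k) ^ 2 = -1) (θ : Fin n → ℝ) :
    ∏ k, (cos (θ k) • (1 : A) + sin (θ k) • i k)
      = (∏ k, cos (θ k)) • (1 : A)
        + ∑ k, i k *
            ((sin (θ k) * ∏ ℓ ∈ Finset.Ioi k, cos (θ ℓ)) •
              ∏ m ∈ Finset.Iio k, (cos (θ m) • (1 : A) + sin (θ m) • i m)) := by
  classical
  set c : ℕ → ℝ := fun m => if h : m < n then cos (θ ⟨m, h⟩) else 1 with hc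
  set s : ℕ → ℝ := fun m => if h : m < n then sin (θ ⟨m, h⟩) else 0 with hs
  set x : ℕ → A := fun m => if h : m < n then i ⟨m, h⟩ else 0 with hx
  have hcv : ∀ k : Fin n, c k.val = cos (θ k) := fun k => by simp [hc, k.isLt]
  have hsv : ∀ k : Fin n, s k.val = sin (θ k) := fun k => by simp [hs, k.isLt]
  have hxv : ∀ k : Fin n, x k.val = i k := fun k => by simp [hx, k.isLt]
  have key := aux_rot c s x n
  -- translate each piece
  have e1 : ∏ k : Fin n, (cos (θ k) • (1 : A) + sin (θ k) • i k)
      = ∏ k ∈ Finset.range n, (c k • (1 : A) + s k • x k) := by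
    rw [← Fin.prod_univ_eq_prod_range]
    exact Finset.prod_congr rfl fun k _ => by rw [hcv, hsv, hxv]
  have e2 : ∏ k : Fin n, cos (θ k) = ∏ k ∈ Finset.range n, c k := by
    rw [← Fin.prod_univ_eq_prod_range]
    exact Finset.prod_congr rfl fun k _ => (hcv k).symm
  have eIio : ∀ k : Fin n,
      ∏ m ∈ Finset.Iio k, (cos (θ m) • (1 : A) + sin (θ m) • i m)
        = ∏ m ∈ Finset.range k.val, (c m • (1 : A) + s m • x m) := by
    intro k
    rw [show Finset.range k.val = Finset.Iio k.val from (Nat.Iio_eq_range k.val).symm, ← Fin.map_valEmbedding_Iio, Finset.prod_map]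
    exact Finset.prod_congr rfl fun m _ => by
      simp only [Fin.valEmbedding_apply]; rw [hcv, hsv, hxv]
  have eIoi : ∀ k : Fin n,
      ∏ ℓ ∈ Finset.Ioi k, cos (θ ℓ) = ∏ ℓ ∈ Finset.Ioo k.val n, c ℓ := by
    intro k
    have hn : Finset.Ioo k.val n = Finset.Ioc k.val (n - 1) := by
      ext a; simp; omega
    rw [← Fin.map_valEmbedding_Ioi, Finset.prod_map]
    exact Finset.prod_congr rfl fun ℓ _ => by
      simp only [Fin.valEmbedding_apply]; rw [hcv]
  have e3 : ∑ k : Fin n, i k *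
        ((sin (θ k) * ∏ ℓ ∈ Finset.Ioi k, cos (θ ℓ)) •
          ∏ m ∈ Finset.Iio k, (cos (θ m) • (1 : A) + sin (θ m) • i m))
      = ∑ k ∈ Finset.range n, x k *
        ((s k * ∏ ℓ ∈ Finset.Ioo k n, c ℓ) •
          ∏ m ∈ Finset.range k, (c m • (1 : A) + s m • x m)) := by
    rw [← Fin.sum_univ_eq_sum_range]
    exact Finset.sum_congr rfl fun k _ => by
      rw [hxv, hsv, eIio, eIoi]
  rw [e1, e2, e3, key]
end

section
/- The LG projection P for n = 2 is injective away from ψ = π/2: if θ, θ′ ∈ [0,2π) and ψ, ψ′ ∈ [0,π) with ψ ≠ π/2 and ψ′ ≠ π/2 satisfy cos θ cos ψ = cos θ′ cos ψ′, sin θ cos ψ = sin θ′ cos ψ′, and s(θ) sin ψ = s(θ′) sin ψ′, then θ = θ′ and ψ = ψ′. -/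
open Real

/-- The sign `s(θ)`: equals `1` for `θ ∈ [0, π)` and `-1` for `θ ∈ [π, 2π)`. -/
noncomputable def LGsign (θ : ℝ) : ℝ := if θ < Real.pi then 1 else -1

private lemma theta_eq (θ θ' : ℝ) (hθ : θ ∈ Set.Ico (0 : ℝ) (2 * π))
    (hθ' : θ' ∈ Set.Ico (0 : ℝ) (2 * π))
    (hc : Real.cos θ = Real.cos θ') (hs : Real.sin θ = Real.sin θ') : θ = θ' := by
  have h1 : Real.cos (θ - θ') = 1 := by
    rw [Real.cos_sub, hc, hs]
    nlinarith [Real.sin_sq_add_cos_sq θ']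
  have := (Real.cos_eq_one_iff_of_lt_of_lt (by linarith [hθ.1, hθ.2, hθ'.1, hθ'.2])
    (by linarith [hθ.1, hθ.2, hθ'.1, hθ'.2])).mp h1
  linarith

/-- The LG projection for `n = 2` is injective away from `ψ = π/2`. -/
theorem LG_projection_injective (θ θ' ψ ψ' : ℝ)
    (hθ : θ ∈ Set.Ico (0 : ℝ) (2 * π)) (hθ' : θ' ∈ Set.Ico (0 : ℝ) (2 * π))
    (hψ : ψ ∈ Set.Ico (0 : ℝ) π) (hψ' : ψ' ∈ Set.Ico (0 : ℝ) π)
    (hψne : ψ ≠ π / 2) (hψ'ne : ψ' ≠ π / 2)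
    (h1 : cos θ * cos ψ = cos θ' * cos ψ')
    (h2 : sin θ * cos ψ = sin θ' * cos ψ')
    (h3 : LGsign θ * sin ψ = LGsign θ' * sin ψ') :
    θ = θ' ∧ ψ = ψ' := by
  have hsψ : Real.sin ψ ≥ 0 := Real.sin_nonneg_of_nonneg_of_le_pi hψ.1 hψ.2.le
  have hsψ' : Real.sin ψ' ≥ 0 := Real.sin_nonneg_of_nonneg_of_le_pi hψ'.1 hψ'.2.le
  -- cos ψ ≠ 0 and cos ψ' ≠ 0
  have hcψ : Real.cos ψ ≠ 0 := by
    intro h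
    exact hψne (Real.injOn_cos ⟨hψ.1, hψ.2.le⟩
      ⟨by positivity, by linarith [Real.pi_pos]⟩ (by rw [h, Real.cos_pi_div_two]))
  have hcψ' : Real.cos ψ' ≠ 0 := by
    intro h
    exact hψ'ne (Real.injOn_cos ⟨hψ'.1, hψ'.2.le⟩
      ⟨by positivity, by linarith [Real.pi_pos]⟩ (by rw [h, Real.cos_pi_div_two]))
  -- cos² equal
  have hc2 : Real.cos ψ ^ 2 = Real.cos ψ' ^ 2 := by
    linear_combination (Real.cos θ * Real.cos ψ + Real.cos θ' * Real.cos ψ') * h1 +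
      (Real.sin θ * Real.cos ψ + Real.sin θ' * Real.cos ψ') * h2 -
      Real.cos ψ ^ 2 * Real.sin_sq_add_cos_sq θ +
      Real.cos ψ' ^ 2 * Real.sin_sq_add_cos_sq θ'
  have hs2 : Real.sin ψ ^ 2 = Real.sin ψ' ^ 2 := by
    nlinarith [Real.sin_sq_add_cos_sq ψ, Real.sin_sq_add_cos_sq ψ']
  have hsin : Real.sin ψ = Real.sin ψ' := by nlinarith
  -- LGsign values
  have hsgn : ∀ x : ℝ, LGsign x = 1 ∨ LGsign x = -1 := by
    intro x; unfold LGsign; split <;> simp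
  rcases eq_or_lt_of_le hsψ with h0 | hpos
  · -- sin ψ = 0, so ψ = 0 and ψ' = 0
    have hψ0 : ψ = 0 := (Real.sin_eq_zero_iff_of_lt_of_lt
      (by linarith [hψ.1, Real.pi_pos]) hψ.2).mp h0.symm
    have hψ'0 : ψ' = 0 := (Real.sin_eq_zero_iff_of_lt_of_lt
      (by linarith [hψ'.1, Real.pi_pos]) hψ'.2).mp (by rw [← hsin, ← h0])
    subst hψ0; subst hψ'0
    simp only [Real.cos_zero, mul_one] at h1 h2
    exact ⟨theta_eq θ θ' hθ hθ' h1 h2, rfl⟩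
  · -- sin ψ > 0
    have hpos' : Real.sin ψ' > 0 := by rw [← hsin]; exact hpos
    have hsgneq : LGsign θ = LGsign θ' := by
      rcases hsgn θ with a | a <;> rcases hsgn θ' with b | b <;> rw [a, b] at h3 ⊢ <;>
        first | rfl | nlinarith
    -- cos ψ = cos ψ' or cos ψ = -cos ψ'
    rcases mul_eq_zero.mp (show (Real.cos ψ - Real.cos ψ') * (Real.cos ψ + Real.cos ψ') = 0 by
        nlinarith) with h | h
    · -- cos ψ = cos ψ'
      have hcc : Real.cos ψ = Real.cos ψ' := by linarith
      have hψeq : ψ = ψ' := Real.injOn_cos ⟨hψ.1, hψ.2.le⟩ ⟨hψ'.1, hψ'.2.le⟩ hcc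
      subst hψeq
      refine ⟨theta_eq θ θ' hθ hθ' ?_ ?_, rfl⟩
      · exact mul_right_cancel₀ hcψ h1
      · exact mul_right_cancel₀ hcψ h2
    · -- cos ψ = -cos ψ' : derive contradiction
      exfalso
      have hcc : Real.cos ψ' = -Real.cos ψ := by linarith
      rw [hcc] at h1 h2
      have hcθ : Real.cos θ = -Real.cos θ' :=
        mul_right_cancel₀ hcψ (by linear_combination h1)
      have hsθ : Real.sin θ = -Real.sin θ' :=
        mul_right_cancel₀ hcψ (by linear_combination h2)
      -- now analyze LGsign
      unfold LGsign at hsgneq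
      by_cases ha : θ < π <;> by_cases hb : θ' < π <;>
        simp only [ha, hb, if_true, if_false, if_pos, if_neg] at hsgneq <;>
        try norm_num at hsgneq
      · -- both in [0, π)
        have s1 : Real.sin θ ≥ 0 := Real.sin_nonneg_of_nonneg_of_le_pi hθ.1 ha.le
        have s2 : Real.sin θ' ≥ 0 := Real.sin_nonneg_of_nonneg_of_le_pi hθ'.1 hb.le
        have e1 : Real.sin θ = 0 := by linarith
        have e2 : Real.sin θ' = 0 := by linarith
        have t1 : θ = 0 := (Real.sin_eq_zero_iff_of_lt_of_lt
          (by linarith [hθ.1, Real.pi_pos]) ha).mp e1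
        have t2 : θ' = 0 := (Real.sin_eq_zero_iff_of_lt_of_lt
          (by linarith [hθ'.1, Real.pi_pos]) hb).mp e2
        rw [t1, t2, Real.cos_zero] at hcθ; linarith
      · -- both in [π, 2π)
        push_neg at ha hb
        have s1 : Real.sin θ ≤ 0 := by
          have := Real.sin_nonneg_of_nonneg_of_le_pi (x := θ - π) (by linarith)
            (by linarith [hθ.2])
          rw [Real.sin_sub_pi] at this; linarith
        have s2 : Real.sin θ' ≤ 0 := by
          have := Real.sin_nonneg_of_nonneg_of_le_pi (x := θ' - π) (by linarith)
            (by linarith [hθ'.2])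
          rw [Real.sin_sub_pi] at this; linarith
        have e1 : Real.sin (θ - π) = 0 := by rw [Real.sin_sub_pi]; linarith
        have e2 : Real.sin (θ' - π) = 0 := by rw [Real.sin_sub_pi]; linarith
        have t1 : θ = π := by
          have := (Real.sin_eq_zero_iff_of_lt_of_lt (x := θ - π)
            (by linarith [Real.pi_pos]) (by linarith [hθ.2])).mp e1
          linarith
        have t2 : θ' = π := by
          have := (Real.sin_eq_zero_iff_of_lt_of_lt (x := θ' - π)
            (by linarith [Real.pi_pos]) (by linarith [hθ'.2])).mp e2
          linarith
        rw [t1, t2, Real.cos_pi] at hcθ; linarith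
end

section
/- For all α₁, β₁ ∈ [0,2π) and all α₂, β₂ ∈ ℝ, if sin α₂ · sin β₂ = 0 or cos(α₁−β₁) = s(α₁)·s(β₁), then the inner product is invariant under the LG projection: cos α₁ cos α₂ cos β₁ cos β₂ + sin α₁ cos α₂ sin β₁ cos β₂ + s(α₁)·s(β₁)·sin α₂ sin β₂ = cos(α₁−β₁)·cos(α₂−β₂). -/
open Real

/-- If `sin α₂ · sin β₂ = 0` or `cos (α₁ − β₁) = s(α₁)·s(β₁)`, then the inner product
is invariant under the LG projection. -/
theorem LG_inner_product_invariant (α₁ β₁ α₂ β₂ : ℝ)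
    (hα₁ : α₁ ∈ Set.Ico (0 : ℝ) (2 * π)) (hβ₁ : β₁ ∈ Set.Ico (0 : ℝ) (2 * π))
    (h : sin α₂ * sin β₂ = 0 ∨ cos (α₁ - β₁) = LGsign α₁ * LGsign β₁) :
    cos α₁ * cos α₂ * (cos β₁ * cos β₂) + sin α₁ * cos α₂ * (sin β₁ * cos β₂)
        + LGsign α₁ * LGsign β₁ * (sin α₂ * sin β₂)
      = cos (α₁ - β₁) * cos (α₂ - β₂) := by
  rw [Real.cos_sub α₁ β₁, Real.cos_sub α₂ β₂]
  rcases h with h | h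
  · rw [h]; ring
  · rw [Real.cos_sub] at h; rw [← h]; ring
end

section
/- For every n ≥ 2, the partial torus parametrization with all radius parameters equal to 1 is injective: if θ and θ′ satisfy θ₁, θ₁′ ∈ [0,2π) and θ_k, θ′_k ∈ [0,π) for 2 ≤ k ≤ n, and if cos θ₁ ∏_{k=2}^{n}(1 + cos θ_k) = cos θ₁′ ∏_{k=2}^{n}(1 + cos θ′_k), sin θ₁ ∏_{k=2}^{n}(1 + cos θ_k) = sin θ₁′ ∏_{k=2}^{n}(1 + cos θ′_k), and s(θ₁) sin θ_k ∏_{ℓ=k+1}^{n}(1 + cos θ_ℓ) = s(θ₁′) sin θ′_k ∏_{ℓ=k+1}^{n}(1 + cos θ′_ℓ) for every 2 ≤ k ≤ n, then θ_k = θ′_k for all 1 ≤ k ≤ n. -/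
open Real Finset

lemma LG_one_add_cos_pos {a : ℝ} (ha : a ∈ Set.Ico (0 : ℝ) π) : 0 < 1 + Real.cos a := by
  have := Real.cos_lt_cos_of_nonneg_of_le_pi ha.1 le_rfl ha.2
  rw [Real.cos_pi] at this
  linarith

lemma LG_cos_half_pos {a : ℝ} (ha : a ∈ Set.Ico (0 : ℝ) π) : 0 < Real.cos (a / 2) := by
  apply Real.cos_pos_of_mem_Ioo
  constructor <;> [linarith [Real.pi_pos, ha.1]; linarith [ha.2]]

/-- Key step lemma: from equality of sine components and of products, deduce equality
of the angle and of the tail products. -/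
lemma LG_step {a b Q Q' : ℝ} (ha : a ∈ Set.Ico (0 : ℝ) π) (hb : b ∈ Set.Ico (0 : ℝ) π)
    (hQ : 0 < Q) (hQ' : 0 < Q')
    (hprod : (1 + Real.cos a) * Q = (1 + Real.cos b) * Q')
    (hsin : Real.sin a * Q = Real.sin b * Q') : a = b ∧ Q = Q' := by
  have key : Real.sin a * (1 + Real.cos b) = Real.sin b * (1 + Real.cos a) := by
    have h : Real.sin a * (1 + Real.cos b) * Q = Real.sin b * (1 + Real.cos a) * Q := by
      linear_combination (1 + Real.cos b) * hsin - Real.sin b * hprod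
    exact mul_right_cancel₀ hQ.ne' h
  have hca : 1 + Real.cos a = 2 * Real.cos (a / 2) ^ 2 := by
    have := Real.cos_sq (a / 2)
    rw [show 2 * (a / 2) = a by ring] at this
    linarith
  have hcb : 1 + Real.cos b = 2 * Real.cos (b / 2) ^ 2 := by
    have := Real.cos_sq (b / 2)
    rw [show 2 * (b / 2) = b by ring] at this
    linarith
  have hsa : Real.sin a = 2 * Real.sin (a / 2) * Real.cos (a / 2) := by
    have := Real.sin_two_mul (a / 2)
    rw [show 2 * (a / 2) = a by ring] at this
    linarith
  have hsb : Real.sin b = 2 * Real.sin (b / 2) * Real.cos (b / 2) := by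
    have := Real.sin_two_mul (b / 2)
    rw [show 2 * (b / 2) = b by ring] at this
    linarith
  have hcah := LG_cos_half_pos ha
  have hcbh := LG_cos_half_pos hb
  have hzero : Real.cos (a / 2) * Real.cos (b / 2) *
      (4 * Real.sin (a / 2 - b / 2)) = 0 := by
    rw [Real.sin_sub]
    rw [hca, hcb, hsa, hsb] at key
    ring_nf
    ring_nf at key
    linarith
  have hs0 : Real.sin (a / 2 - b / 2) = 0 := by
    rcases mul_eq_zero.mp hzero with h | h
    · rcases mul_eq_zero.mp h with h' | h' <;> nlinarith
    · linarith
  have hab : a / 2 - b / 2 = 0 := by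
    rw [Real.sin_eq_zero_iff_of_lt_of_lt (by linarith [ha.1, hb.2, Real.pi_pos])
      (by linarith [hb.1, ha.2, Real.pi_pos])] at hs0
    exact hs0
  have hab' : a = b := by linarith
  refine ⟨hab', ?_⟩
  rw [hab'] at hprod
  exact mul_left_cancel₀ (LG_one_add_cos_pos hb).ne' hprod

/-- For every `n ≥ 2`, the partial torus parametrization with all radius parameters
equal to `1` is injective on its parameter domain. -/
theorem partial_torus_injective (n : ℕ) (hn : 2 ≤ n) (θ θ' : ℕ → ℝ)
    (h1 : θ 1 ∈ Set.Ico (0 : ℝ) (2 * π)) (h1' : θ' 1 ∈ Set.Ico (0 : ℝ) (2 * π))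
    (hk : ∀ k, 2 ≤ k → k ≤ n → θ k ∈ Set.Ico (0 : ℝ) π)
    (hk' : ∀ k, 2 ≤ k → k ≤ n → θ' k ∈ Set.Ico (0 : ℝ) π)
    (heq0 : cos (θ 1) * ∏ k ∈ Finset.Icc 2 n, (1 + cos (θ k))
          = cos (θ' 1) * ∏ k ∈ Finset.Icc 2 n, (1 + cos (θ' k)))
    (heq1 : sin (θ 1) * ∏ k ∈ Finset.Icc 2 n, (1 + cos (θ k))
          = sin (θ' 1) * ∏ k ∈ Finset.Icc 2 n, (1 + cos (θ' k)))
    (heqk : ∀ k, 2 ≤ k → k ≤ n →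
        LGsign (θ 1) * sin (θ k) * ∏ ℓ ∈ Finset.Icc (k + 1) n, (1 + cos (θ ℓ))
      = LGsign (θ' 1) * sin (θ' k) * ∏ ℓ ∈ Finset.Icc (k + 1) n, (1 + cos (θ' ℓ))) :
    ∀ k, 1 ≤ k → k ≤ n → θ k = θ' k := by
  -- positivity of products
  have hpos : ∀ m, 2 ≤ m → 0 < ∏ ℓ ∈ Finset.Icc m n, (1 + cos (θ ℓ)) := by
    intro m hm
    apply Finset.prod_pos
    intro i hi
    simp only [Finset.mem_Icc] at hi
    exact LG_one_add_cos_pos (hk i (hm.trans hi.1) hi.2)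
  have hpos' : ∀ m, 2 ≤ m → 0 < ∏ ℓ ∈ Finset.Icc m n, (1 + cos (θ' ℓ)) := by
    intro m hm
    apply Finset.prod_pos
    intro i hi
    simp only [Finset.mem_Icc] at hi
    exact LG_one_add_cos_pos (hk' i (hm.trans hi.1) hi.2)
  set P : ℝ := ∏ ℓ ∈ Finset.Icc 2 n, (1 + cos (θ ℓ)) with hPdef
  set P' : ℝ := ∏ ℓ ∈ Finset.Icc 2 n, (1 + cos (θ' ℓ)) with hP'def
  have hP : 0 < P := hpos 2 le_rfl
  have hP' : 0 < P' := hpos' 2 le_rfl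
  -- equality of the full products
  have hPP' : P = P' := by
    have hsq : P ^ 2 = P' ^ 2 := by
      have e1 : (cos (θ 1) * P) ^ 2 + (sin (θ 1) * P) ^ 2 = P ^ 2 := by
        have := Real.sin_sq_add_cos_sq (θ 1); nlinarith
      have e2 : (cos (θ' 1) * P') ^ 2 + (sin (θ' 1) * P') ^ 2 = P' ^ 2 := by
        have := Real.sin_sq_add_cos_sq (θ' 1); nlinarith
      rw [heq0, heq1] at e1
      linarith
    nlinarith
  -- equality of first angles
  have hc1 : cos (θ 1) = cos (θ' 1) := by
    rw [hPP'] at heq0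
    exact mul_right_cancel₀ hP'.ne' heq0
  have hs1 : sin (θ 1) = sin (θ' 1) := by
    rw [hPP'] at heq1
    exact mul_right_cancel₀ hP'.ne' heq1
  have hθ1 : θ 1 = θ' 1 := by
    have hcos : cos (θ 1 - θ' 1) = 1 := by
      rw [Real.cos_sub, hc1, hs1]
      have := Real.sin_sq_add_cos_sq (θ' 1); nlinarith
    have h0 : θ 1 - θ' 1 = 0 := by
      rw [Real.cos_eq_one_iff_of_lt_of_lt (by linarith [h1.1, h1'.2])
        (by linarith [h1'.1, h1.2])] at hcos
      exact hcos
    linarith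
  -- cancel the signs in heqk
  have hsgn : LGsign (θ 1) ≠ 0 := by
    unfold LGsign; split <;> norm_num
  have heqk' : ∀ k, 2 ≤ k → k ≤ n →
      sin (θ k) * ∏ ℓ ∈ Finset.Icc (k + 1) n, (1 + cos (θ ℓ))
    = sin (θ' k) * ∏ ℓ ∈ Finset.Icc (k + 1) n, (1 + cos (θ' ℓ)) := by
    intro k h2 hkn
    have h := heqk k h2 hkn
    rw [← hθ1] at h
    rw [mul_assoc, mul_assoc] at h
    exact mul_left_cancel₀ hsgn h
  -- product splitting
  have hsplit : ∀ (f : ℕ → ℝ) (k : ℕ), 2 ≤ k → k ≤ n →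
      ∏ ℓ ∈ Finset.Icc k n, f ℓ = f k * ∏ ℓ ∈ Finset.Icc (k + 1) n, f ℓ := by
    intro f k _ hkn
    rw [← Finset.Ico_add_one_right_eq_Icc, Finset.prod_eq_prod_Ico_succ_bot (by omega) f,
      Finset.Ico_add_one_right_eq_Icc]
  -- main induction
  have inv : ∀ j : ℕ, 2 + j ≤ n + 1 →
      ((∏ ℓ ∈ Finset.Icc (2 + j) n, (1 + cos (θ ℓ)))
        = ∏ ℓ ∈ Finset.Icc (2 + j) n, (1 + cos (θ' ℓ)))
      ∧ ∀ ℓ, 2 ≤ ℓ → ℓ < 2 + j → θ ℓ = θ' ℓ := by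
    intro j
    induction j with
    | zero =>
      intro _
      exact ⟨hPP', fun ℓ h2 hl => absurd h2 (by omega)⟩
    | succ j ih =>
      intro hj
      obtain ⟨ihp, ihθ⟩ := ih (by omega)
      set k := 2 + j with hkdef
      have hkn : k ≤ n := by omega
      have h2k : 2 ≤ k := by omega
      have hQ : 0 < ∏ ℓ ∈ Finset.Icc (k + 1) n, (1 + cos (θ ℓ)) := hpos (k + 1) (by omega)
      have hQ' : 0 < ∏ ℓ ∈ Finset.Icc (k + 1) n, (1 + cos (θ' ℓ)) := hpos' (k + 1) (by omega)
      have hprod : (1 + cos (θ k)) * ∏ ℓ ∈ Finset.Icc (k + 1) n, (1 + cos (θ ℓ))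
          = (1 + cos (θ' k)) * ∏ ℓ ∈ Finset.Icc (k + 1) n, (1 + cos (θ' ℓ)) := by
        rw [← hsplit (fun ℓ => 1 + cos (θ ℓ)) k h2k hkn,
          ← hsplit (fun ℓ => 1 + cos (θ' ℓ)) k h2k hkn]
        exact ihp
      obtain ⟨hθk, hQQ'⟩ := LG_step (hk k h2k hkn) (hk' k h2k hkn) hQ hQ' hprod
        (heqk' k h2k hkn)
      refine ⟨?_, ?_⟩
      · have : (2 + (j + 1)) = k + 1 := by omega
        rw [this]
        exact hQQ'
      · intro ℓ h2 hl
        rcases lt_or_eq_of_le (Nat.lt_succ_iff.mp (by omega : ℓ < k + 1)) with h | h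
        · exact ihθ ℓ h2 (by omega)
        · rw [h]; exact hθk
  intro k hk1 hkn
  rcases Nat.lt_or_ge k 2 with h2 | h2
  · have : k = 1 := by omega
    rw [this]; exact hθ1
  · exact (inv (n - 1) (by omega)).2 k h2 (by omega)
end
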